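/- Suppose ≻_s is a partial order (asymmetric and transitive) for every s ∈ S. Then every student optimal stable matching (SOSM) for ≻ is an SOSM for some extension profile ≻' of ≻. -/

import Mathlib

/-! Common definitions for school choice with partial priorities
(Kitahara–Okumura, "On extensions of partial priorities in school choice"). -/

/-- A binary relation is asymmetric. -/
def Asymm {I : Type*} (B : I → I → Prop) : Prop :=
  ∀ i j, B i j → ¬ B j i

/-- Negative transitivity. -/
def NegTransitive {I : Type*} (B : I → I → Prop) : Prop :=
  ∀ a b c : I, ¬ B a b → ¬ B b c → ¬ B a c

/-- Acyclicity: there are no `K ≥ 1` and `x₀, …, x_K` with `(x_{k-1}, x_k) ∈ B` for all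
`k = 1, …, K` and `(x_K, x₀) ∈ B`. -/
def AcyclicRel {I : Type*} (B : I → I → Prop) : Prop :=
  ¬ ∃ (K : ℕ) (x : ℕ → I), 1 ≤ K ∧ (∀ k, 1 ≤ k → k ≤ K → B (x (k - 1)) (x k)) ∧ B (x K) (x 0)

/-- A (strict) partial order: an asymmetric relation that is transitive. -/
def PartialOrderRel {I : Type*} (B : I → I → Prop) : Prop :=
  Asymm B ∧ Transitive B

/-- A weak order: a partial order that is negatively transitive. -/
def WeakOrderRel {I : Type*} (B : I → I → Prop) : Prop :=
  PartialOrderRel B ∧ NegTransitive B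

/-- A total order: a weak order that is complete. -/
def TotalOrderRel {I : Type*} (B : I → I → Prop) : Prop :=
  WeakOrderRel B ∧ ∀ a b : I, a ≠ b → B a b ∨ B b a

/-- A strict total order preference over `Option S`, where `none` is the outside option `∅`. -/
def StrictPref {S : Type*} (P : Option S → Option S → Prop) : Prop :=
  Asymm P ∧ Transitive P ∧ ∀ a b : Option S, a ≠ b → P a b ∨ P b a

/-- The weak preference `R` associated with `P`: `a R b` iff `a P b` or `a = b`. -/
def RPref {S : Type*} (P : Option S → Option S → Prop) (a b : Option S) : Prop :=
  P a b ∨ a = b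

/-- A matching: an assignment of students to schools (or `none`) respecting capacities. -/
def IsMatching {I S : Type*} [Fintype I] (q : S → ℕ) (μ : I → Option S) : Prop :=
  ∀ s : S, {i : I | μ i = some s}.ncard ≤ q s

/-- Individual rationality: every student weakly prefers her assignment to `∅`. -/
def IndividuallyRational {I S : Type*} (P : I → Option S → Option S → Prop)
    (μ : I → Option S) : Prop :=
  ∀ i, RPref (P i) (μ i) none

/-- Non-wastefulness: whenever a student strictly prefers `s` to her assignment, `s` is full. -/
def NonWasteful {I S : Type*} [Fintype I] (P : I → Option S → Option S → Prop) (q : S → ℕ)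
    (μ : I → Option S) : Prop :=
  ∀ i s, P i (some s) (μ i) → {j : I | μ j = some s}.ncard = q s

/-- Fairness for the priority profile `pr`: no student's priority is violated. -/
def Fair {I S : Type*} (P : I → Option S → Option S → Prop) (pr : S → I → I → Prop)
    (μ : I → Option S) : Prop :=
  ¬ ∃ (i j : I) (s : S), μ j = some s ∧ μ i ≠ some s ∧ RPref (P i) (some s) (μ i) ∧ pr s i j

/-- Stability for the priority profile `pr`. -/
def StableFor {I S : Type*} [Fintype I] (P : I → Option S → Option S → Prop) (q : S → ℕ)
    (pr : S → I → I → Prop) (μ : I → Option S) : Prop :=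
  IndividuallyRational P μ ∧ NonWasteful P q μ ∧ Fair P pr μ

/-- `μ'` Pareto dominates `μ`. -/
def ParetoDominates {I S : Type*} (P : I → Option S → Option S → Prop)
    (μ' μ : I → Option S) : Prop :=
  (∀ i, RPref (P i) (μ' i) (μ i)) ∧ ∃ i, P i (μ' i) (μ i)

/-- A student optimal stable matching (SOSM) for `pr`. -/
def IsSOSM {I S : Type*} [Fintype I] (P : I → Option S → Option S → Prop) (q : S → ℕ)
    (pr : S → I → I → Prop) (μ : I → Option S) : Prop :=
  StableFor P q pr μ ∧
    ¬ ∃ μ' : I → Option S, IsMatching q μ' ∧ StableFor P q pr μ' ∧ ParetoDominates P μ' μ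

/-- `B'` is a total order extension of `B`. -/
def IsExtension {I : Type*} (B B' : I → I → Prop) : Prop :=
  TotalOrderRel B' ∧ ∀ i j, B i j → B' i j

/-- `pr'` is an extension profile of `pr`. -/
def IsExtensionProfile {I S : Type*} (pr pr' : S → I → I → Prop) : Prop :=
  ∀ s, IsExtension (pr s) (pr' s)

/-- The maximal set `M(I', B)` of elements of `I'` undominated within `I'`. -/
def MaximalSet {I : Type*} (B : I → I → Prop) (I' : Set I) : Set I :=
  {i ∈ I' | ∀ j ∈ I', j ≠ i → ¬ B j i}

/-- `e` enumerates `I` as a sequential maximal ordering (SMO) sequence for `B`: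
each element is chosen from the maximal set of the remaining elements. -/
def IsSMOSeq {I : Type*} [Fintype I] (B : I → I → Prop)
    (e : Fin (Fintype.card I) ≃ I) : Prop :=
  ∀ t, e t ∈ MaximalSet B {i | ∀ t' : Fin (Fintype.card I), t' < t → e t' ≠ i}

/-- The total order induced by an enumeration: earlier elements rank higher. -/
def InducedOrder {I : Type*} [Fintype I] (e : Fin (Fintype.card I) ≃ I) : I → I → Prop :=
  fun i j => e.symm i < e.symm j

/-- `e` is the `r`-tiebreaking SMO sequence for `B`: at each step it picks the element of the
maximal set of the remaining elements minimizing `r`. -/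
def IsRTiebreakSMOSeq {I : Type*} [Fintype I] (B : I → I → Prop)
    (r : I ≃ Fin (Fintype.card I)) (e : Fin (Fintype.card I) ≃ I) : Prop :=
  IsSMOSeq B e ∧
    ∀ t, ∀ i ∈ MaximalSet B {i | ∀ t' : Fin (Fintype.card I), t' < t → e t' ≠ i},
      r (e t) ≤ r i

/-- `pr'` is obtained from `pr` by a single (common) tiebreaking rule: one bijection
`r` from `I` to `{1, …, |I|}` such that every `pr' s` is induced by the `r`-tiebreaking SMO
sequence for `pr s`. -/
def SingleTiebreakProfile {I S : Type*} [Fintype I] (pr pr' : S → I → I → Prop) : Prop :=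
  ∃ r : I ≃ Fin (Fintype.card I), ∀ s : S,
    ∃ e : Fin (Fintype.card I) ≃ I, IsRTiebreakSMOSeq (pr s) r e ∧ pr' s = InducedOrder e

/-- Partial stability for `(pr, C)`: individually rational, non-wasteful, and every priority
violation is allowed by `C`. -/
def PartiallyStable {I S : Type*} [Fintype I] (P : I → Option S → Option S → Prop) (q : S → ℕ)
    (pr : S → I → I → Prop) (C : S → I → I → Prop) (μ : I → Option S) : Prop :=
  IndividuallyRational P μ ∧ NonWasteful P q μ ∧
    ∀ (i j : I) (s : S), μ j = some s → P i (some s) (μ i) → pr s i j → C s i j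

/-!
For each school `s`, let `A` be the students assigned to `s` and `C` the students not at `s`
who weakly prefer it. Ranking every student of `A` above every student of `C` and closing
`≻_s` transitively gives a strict partial order exactly because `μ` is fair for `≻_s`; any total
extension of it is an extension of `≻_s` for which `μ` is still fair. Extending priorities only
removes stable matchings, so `μ` stays student optimal.
-/

open Relation

section TotalExtension

variable {I : Type*} {B : I → I → Prop}

theorem PartialOrderRel.isPartialOrder_reflGen (hB : PartialOrderRel B) :
    IsPartialOrder I (ReflGen B) :=
  have : IsTrans I B := ⟨hB.2⟩
  { antisymm := by
      rintro a b (_ | hab) (_ | hba)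
      all_goals first | rfl | exact (hB.1 a b hab hba).elim }

theorem totalOrderRel_of_isLinearOrder (s : I → I → Prop) [IsLinearOrder I s] :
    TotalOrderRel fun a b => s a b ∧ a ≠ b := by
  refine ⟨⟨⟨?asymm, ?trans⟩, ?negTrans⟩, ?complete⟩
  case asymm => exact fun a b hab hba => hab.2 (antisymm hab.1 hba.1)
  case trans =>
    rintro a b c ⟨hab, hne⟩ ⟨hbc, -⟩
    exact ⟨_root_.trans hab hbc, fun hac => hne (antisymm hab (hac ▸ hbc))⟩
  case negTrans =>
    intro a b c hab hbc hac
    have hba : s b a := by_contra fun h =>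
      hab ⟨(total_of s a b).resolve_right h, by rintro rfl; exact h (refl a)⟩
    have hcb : s c b := by_contra fun h =>
      hbc ⟨(total_of s b c).resolve_right h, by rintro rfl; exact h (refl b)⟩
    exact hac.2 (antisymm hac.1 (_root_.trans hcb hba))
  case complete =>
    intro a b hne
    exact (total_of s a b).imp (⟨·, hne⟩) (⟨·, hne.symm⟩)

/-- Szpilrajn's extension theorem for strict partial orders. -/
theorem PartialOrderRel.exists_isExtension (hB : PartialOrderRel B) : ∃ B', IsExtension B B' := by
  have := hB.isPartialOrder_reflGen
  obtain ⟨s, hs, hle⟩ := extend_partialOrder (ReflGen B)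
  refine ⟨fun a b => s a b ∧ a ≠ b, totalOrderRel_of_isLinearOrder s, fun a b hab => ?_⟩
  exact ⟨hle a b (.single hab), by rintro rfl; exact hB.1 a a hab hab⟩

end TotalExtension

section AdjoinProduct

variable {I : Type*} {B : I → I → Prop} {A C : Set I}

/-- The smallest transitive relation containing `B` and `A × C`, for `B` transitive. -/
def adjoinProduct (B : I → I → Prop) (A C : Set I) (a b : I) : Prop :=
  B a b ∨ ∃ x ∈ A, ∃ y ∈ C, ReflGen B a x ∧ ReflGen B y b

theorem partialOrderRel_adjoinProduct (hB : PartialOrderRel B)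
    (hCA : ∀ x ∈ A, ∀ y ∈ C, ¬ ReflGen B y x) : PartialOrderRel (adjoinProduct B A C) := by
  have : IsTrans I B := ⟨hB.2⟩
  have htrans : ∀ ⦃a b c⦄, adjoinProduct B A C a b → adjoinProduct B A C b c →
      adjoinProduct B A C a c := by
    rintro a b c (hab | ⟨x, hx, y, hy, hax, hyb⟩) (hbc | ⟨x', hx', y', hy', hbx', hyc'⟩)
    · exact .inl (hB.2 hab hbc)
    · exact .inr ⟨x', hx', y', hy', _root_.trans (ReflGen.single hab) hbx', hyc'⟩
    · exact .inr ⟨x, hx, y, hy, hax, _root_.trans hyb (ReflGen.single hbc)⟩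
    · exact .inr ⟨x, hx, y', hy', hax, hyc'⟩
  have hirrefl : ∀ a, ¬ adjoinProduct B A C a a := by
    rintro a (haa | ⟨x, hx, y, hy, hax, hya⟩)
    · exact hB.1 a a haa haa
    · exact hCA x hx y hy (_root_.trans hya hax)
  exact ⟨fun a b hab hba => hirrefl a (htrans hab hba), htrans⟩

theorem PartialOrderRel.exists_isExtension_not_rel_of_not_reflGen (hB : PartialOrderRel B)
    (hCA : ∀ x ∈ A, ∀ y ∈ C, ¬ ReflGen B y x) :
    ∃ B', IsExtension B B' ∧ ∀ x ∈ A, ∀ y ∈ C, ¬ B' y x := by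
  obtain ⟨B', hB'tot, hle⟩ := (partialOrderRel_adjoinProduct hB hCA).exists_isExtension
  refine ⟨B', ⟨hB'tot, fun a b hab => hle a b (.inl hab)⟩, fun x hx y hy hyx => ?_⟩
  exact hB'tot.1.1.1 y x hyx (hle x y (.inr ⟨x, hx, y, hy, .refl, .refl⟩))

end AdjoinProduct

section SchoolChoice

variable {I S : Type*} {P : I → Option S → Option S → Prop} {pr pr' : S → I → I → Prop}
  {μ : I → Option S}

def envious (P : I → Option S → Option S → Prop) (μ : I → Option S) (s : S) : Set I :=
  {i | μ i ≠ some s ∧ RPref (P i) (some s) (μ i)}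

theorem fair_iff :
    Fair P pr μ ↔ ∀ s, ∀ j ∈ μ ⁻¹' {some s}, ∀ i ∈ envious P μ s, ¬ pr s i j := by
  simp only [Fair, envious, Set.mem_preimage, Set.mem_singleton_iff, Set.mem_ofPred_eq]
  grind

theorem Fair.not_reflGen (h : Fair P pr μ) {s : S} {j i : I} (hj : j ∈ μ ⁻¹' {some s})
    (hi : i ∈ envious P μ s) : ¬ ReflGen (pr s) i j := by
  rintro (_ | hij)
  · exact hi.1 hj
  · exact fair_iff.1 h s j hj i hi hij

theorem Fair.mono (hle : pr ≤ pr') (h : Fair P pr' μ) : Fair P pr μ :=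
  fun ⟨i, j, s, hj, hi, hR, hij⟩ => h ⟨i, j, s, hj, hi, hR, hle s i j hij⟩

variable [Fintype I] {q : S → ℕ}

theorem StableFor.mono (hle : pr ≤ pr') (h : StableFor P q pr' μ) :
    StableFor P q pr μ :=
  ⟨h.1, h.2.1, h.2.2.mono hle⟩

theorem IsSOSM.of_stableFor_of_le (h : IsSOSM P q pr μ) (hμ : StableFor P q pr' μ)
    (hle : pr ≤ pr') : IsSOSM P q pr' μ :=
  ⟨hμ, fun ⟨μ', hμ', hst, hdom⟩ => h.2 ⟨μ', hμ', hst.mono hle, hdom⟩⟩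

end SchoolChoice

theorem sosm_is_sosm_for_some_extension_general {I S : Type*} [Fintype I]
    (P : I → Option S → Option S → Prop)
    (q : S → ℕ)
    (pr : S → I → I → Prop) (hpr : ∀ s, PartialOrderRel (pr s))
    (μ : I → Option S) (hsosm : IsSOSM P q pr μ) :
    ∃ pr' : S → I → I → Prop, IsExtensionProfile pr pr' ∧ IsSOSM P q pr' μ := by
  have hfair := hsosm.1.2.2
  choose pr' hext havoid using fun s =>
    (hpr s).exists_isExtension_not_rel_of_not_reflGen fun _ hj _ hi => hfair.not_reflGen hj hi
  have hstable : StableFor P q pr' μ :=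
    ⟨hsosm.1.1, hsosm.1.2.1, fair_iff.2 havoid⟩
  exact ⟨pr', hext, hsosm.of_stableFor_of_le hstable fun s => (hext s).2⟩

/-- Corollary 2, SOSMs: with partial order priorities, every SOSM for `pr` is an
SOSM for some extension profile of `pr`. -/
theorem sosm_is_sosm_for_some_extension {I S : Type*} [Fintype I] [Fintype S]
    (hI : 3 ≤ Fintype.card I)
    (P : I → Option S → Option S → Prop) (hP : ∀ i, StrictPref (P i))
    (q : S → ℕ) (hq : ∀ s, 1 ≤ q s)
    (pr : S → I → I → Prop) (hpr : ∀ s, PartialOrderRel (pr s))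
    (μ : I → Option S) (hμ : IsMatching q μ) (hsosm : IsSOSM P q pr μ) :
    ∃ pr' : S → I → I → Prop, IsExtensionProfile pr pr' ∧ IsSOSM P q pr' μ :=
  sosm_is_sosm_for_some_extension_general P q pr hpr μ hsosm
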